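/- arXiv:0811.3413 — 4 statements merged into one kernel-verified Lean document; each statement's English description precedes it below -/
import Mathlib

section
/- In any of ℝⁿ, Hⁿ, or Sⁿ with n ≥ 3, suppose the single-bubble area function A is strictly concave and the standard double bubble area A(v,w) is strictly concave and symmetric in its arguments. If w < v ≤ 2w and the Hutchings function satisfies F((v+w)/2, (v+w)/2) > 0, then F(v,w) > 0. -/
/-! With `c = v + w`, the map `g x = 2 A (x / 2) + A (c - x)` is concave on `(0, c)`, and
`g (2c/3) = 3 A (c/3) > 2 A (c/4) + A (c/2) = g (c/2)` by strict concavity of `A`. As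
`c/2 < v ≤ 2c/3`, concavity of `g` gives `2 A (v/2) + A w = g v > g (c/2)`. Strict concavity and
symmetry of the double bubble area give `B v w < B (c/2) (c/2)`, so moving from `(c/2, c/2)`
to `(v, w)` strictly increases the Hutchings function. -/

open Set

theorem ConcaveOn.lt_of_mem_Ioc {𝕜 β : Type*} [Field 𝕜] [LinearOrder 𝕜] [IsStrictOrderedRing 𝕜]
    [AddCommMonoid β] [LinearOrder β] [IsOrderedCancelAddMonoid β] [Module 𝕜 β]
    [PosSMulStrictMono 𝕜 β] {s : Set 𝕜} {f : 𝕜 → β} (hf : ConcaveOn 𝕜 s f) {x y z : 𝕜}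
    (hx : x ∈ s) (hy : y ∈ s) (hz : z ∈ Ioc x y) (hxy : f x < f y) : f x < f z := by
  obtain hzy | rfl := hz.2.lt_or_eq
  · by_cases hfzy : f z < f y
    · have hz' : z ∈ openSegment 𝕜 y x := by
        rw [openSegment_symm, openSegment_eq_Ioo (hz.1.trans hzy)]
        exact ⟨hz.1, hzy⟩
      exact hf.lt_right_of_left_lt hy hx hz' hfzy
    · exact hxy.trans_le (not_lt.1 hfzy)
  · exact hxy

theorem ConcaveOn.comp_mul_add {f : ℝ → ℝ} {s : Set ℝ} (hf : ConcaveOn ℝ s f) (a b : ℝ) :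
    ConcaveOn ℝ ((fun x ↦ a * x + b) ⁻¹' s) (fun x ↦ f (a * x + b)) :=
  hf.comp_affineMap ((a • LinearMap.id).toAffineMap + AffineMap.const ℝ ℝ b)

theorem concaveOn_two_mul_half_add_sub {A : ℝ → ℝ} (hA : ConcaveOn ℝ (Ioi 0) A) (c : ℝ) :
    ConcaveOn ℝ (Ioo 0 c) (fun x ↦ 2 * A (x / 2) + A (c - x)) := by
  have half := (hA.comp_mul_add (1 / 2) 0).smul (by norm_num : (0 : ℝ) ≤ 2)
  have compl := hA.comp_mul_add (-1) c
  refine ((half.subset ?_ (convex_Ioo 0 c)).add (compl.subset ?_ (convex_Ioo 0 c))).congr ?_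
  · intro x hx; simp only [mem_preimage, mem_Ioi]; linarith [hx.1]
  · intro x hx; simp only [mem_preimage, mem_Ioi]; linarith [hx.2]
  · intro x _
    simp only [Pi.add_apply, smul_eq_mul]
    ring_nf

theorem two_mul_apply_quarter_add_apply_half_lt {A : ℝ → ℝ} (hA : StrictConcaveOn ℝ (Ioi 0) A)
    {v w : ℝ} (hw : 0 < w) (hwv : w < v) (hv : v ≤ 2 * w) :
    2 * A ((v + w) / 4) + A ((v + w) / 2) < 2 * A (v / 2) + A w := by
  obtain ⟨c, hc⟩ : ∃ c, v + w = c := ⟨_, rfl⟩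
  rw [hc]
  have hthird : 2 / 3 * A (c / 4) + 1 / 3 * A (c / 2) < A (c / 3) := by
    have := hA.2 (x := c / 4) (y := c / 2) (mem_Ioi.2 (by linarith)) (mem_Ioi.2 (by linarith))
      (by linarith) (by norm_num : (0 : ℝ) < 2 / 3) (by norm_num : (0 : ℝ) < 1 / 3) (by norm_num)
    simp only [smul_eq_mul] at this
    rwa [show 2 / 3 * (c / 4) + 1 / 3 * (c / 2) = c / 3 by ring] at this
  have hends : 2 * A (c / 2 / 2) + A (c - c / 2) < 2 * A (2 * c / 3 / 2) + A (c - 2 * c / 3) := by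
    rw [show c / 2 / 2 = c / 4 by ring, show c - c / 2 = c / 2 by ring,
      show 2 * c / 3 / 2 = c / 3 by ring, show c - 2 * c / 3 = c / 3 by ring]
    linarith
  have key := (concaveOn_two_mul_half_add_sub hA.concaveOn c).lt_of_mem_Ioc
    (x := c / 2) (y := 2 * c / 3) (z := v) ⟨by linarith, by linarith⟩ ⟨by linarith, by linarith⟩
    ⟨by linarith, by linarith⟩ hends
  rwa [show c / 2 / 2 = c / 4 by ring, show c - c / 2 = c / 2 by ring,
    show c - v = w by linarith] at key

theorem StrictConcaveOn.lt_apply_midpoint_of_symm {s : Set ℝ} {B : ℝ → ℝ → ℝ}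
    (hB : StrictConcaveOn ℝ (s ×ˢ s) (fun p : ℝ × ℝ ↦ B p.1 p.2)) (hBsymm : ∀ x y, B x y = B y x)
    {v w : ℝ} (hv : v ∈ s) (hw : w ∈ s) (hvw : v ≠ w) :
    B v w < B ((v + w) / 2) ((v + w) / 2) := by
  have := hB.2 (mk_mem_prod hv hw) (mk_mem_prod hw hv) (by simp [hvw])
    (by norm_num : (0 : ℝ) < 1 / 2) (by norm_num : (0 : ℝ) < 1 / 2) (by norm_num)
  simp only [Prod.smul_mk, smul_eq_mul, Prod.mk_add_mk, hBsymm w v] at this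
  rw [show 1 / 2 * v + 1 / 2 * w = (v + w) / 2 by ring,
    show 1 / 2 * w + 1 / 2 * v = (v + w) / 2 by ring] at this
  linarith

/-- S-balancing: if `A` (single bubble area) is strictly concave on positive volumes,
the standard double bubble area `B` is strictly concave and symmetric, `w < v ≤ 2w`, and
the Hutchings function `F(m,m) = 2A(m/2) + A(m) + A(2m) − 2B(m,m)` is positive at
`m = (v+w)/2`, then `F(v,w) = 2A(v/2) + A(w) + A(v+w) − 2B(v,w)` is positive. -/
theorem s_balancing (A : ℝ → ℝ) (B : ℝ → ℝ → ℝ)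
    (hA : StrictConcaveOn ℝ (Set.Ioi 0) A)
    (hB : StrictConcaveOn ℝ (Set.Ioi 0 ×ˢ Set.Ioi 0) (fun p : ℝ × ℝ => B p.1 p.2))
    (hBsymm : ∀ x y, B x y = B y x)
    (v w : ℝ) (hw : 0 < w) (hwv : w < v) (hv2w : v ≤ 2 * w)
    (hFmid : 2 * A ((v + w) / 4) + A ((v + w) / 2) + A (v + w) -
      2 * B ((v + w) / 2) ((v + w) / 2) > 0) :
    2 * A (v / 2) + A w + A (v + w) - 2 * B v w > 0 := by
  have hsingle := two_mul_apply_quarter_add_apply_half_lt hA hw hwv hv2w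
  have hdouble := hB.lt_apply_midpoint_of_symm hBsymm (mem_Ioi.2 (hw.trans hwv)) (mem_Ioi.2 hw)
    hwv.ne'
  linarith
end

section
/- If 0.84 w ≤ v ≤ w, then 2A(v/2) + A(w) + A(v+w) > 2.02676 · A(v,w), where A(x) = (36π)^{1/3} x^{2/3} is the Euclidean sphere area and A(v,w) is the area of the standard double bubble in ℝ³, using that A(v,w) ≤ A((v+w)/2,(v+w)/2) = 2^{−4/3}·3·A(v+w) by concavity. -/
/-- Euclidean sphere area enclosing volume `x`. -/
noncomputable def euclideanArea (x : ℝ) : ℝ :=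
  (36 * Real.pi) ^ ((1 : ℝ) / 3) * x ^ ((2 : ℝ) / 3)

/-!
By concavity of the double bubble area, `A(v, w) ≤ 2^{-4/3} · 3 · A(v + w)`. Since `A` is
homogeneous of degree `2/3`, dividing by `A(v + w)` and putting `t = w / (v + w)` reduces the
claim to `2.02676 · 3 · 2^{-4/3} < 2^{1/3} (1 - t)^{2/3} + t^{2/3} + 1` for `t ∈ [1/2, 25/46]`
(`25/46 = 1/1.84`).
The right-hand side is concave in `t`, so it suffices to check the two endpoints, which is done
with rational bounds on the cube roots involved; at `t = 25/46` the margin is about `4 · 10⁻⁶`.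
-/

open Real Set

lemma le_rpow_div_of_pow_le {x r : ℝ} {m n : ℕ} (hx : 0 ≤ x) (hn : n ≠ 0) (h : r ^ n ≤ x ^ m) :
    r ≤ x ^ ((m : ℝ) / n) := by
  refine le_of_pow_le_pow_left₀ hn (by positivity) ?_
  rwa [← rpow_natCast (x ^ _), ← rpow_mul hx, div_mul_cancel₀ _ (by exact_mod_cast hn), rpow_natCast]

lemma euclideanArea_mul {c x : ℝ} (hc : 0 ≤ c) (hx : 0 ≤ x) :
    euclideanArea (c * x) = c ^ ((2 : ℝ) / 3) * euclideanArea x := by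
  rw [euclideanArea, euclideanArea, mul_rpow hc hx]
  ring

lemma two_mul_euclideanArea_half {x : ℝ} (hx : 0 ≤ x) :
    2 * euclideanArea (x / 2) = 2 ^ ((1 : ℝ) / 3) * euclideanArea x := by
  have h2 : (2 : ℝ) * (2 ^ ((2 : ℝ) / 3))⁻¹ = 2 ^ ((1 : ℝ) / 3) := by
    rw [← div_eq_mul_inv, show (1 : ℝ) / 3 = 1 - 2 / 3 by norm_num, rpow_sub two_pos, rpow_one]
  rw [div_eq_inv_mul, euclideanArea_mul (by norm_num) hx, inv_rpow zero_le_two, ← mul_assoc, h2]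

lemma euclideanArea_pos {x : ℝ} (hx : 0 < x) : 0 < euclideanArea x := by
  unfold euclideanArea; positivity

noncomputable def splitAreaRatio (t : ℝ) : ℝ :=
  2 ^ ((1 : ℝ) / 3) * (1 - t) ^ ((2 : ℝ) / 3) + t ^ ((2 : ℝ) / 3)

lemma two_mul_euclideanArea_half_add {v w : ℝ} (hv : 0 ≤ v) (hw : 0 ≤ w) (hvw : 0 < v + w) :
    2 * euclideanArea (v / 2) + euclideanArea w =
      splitAreaRatio (w / (v + w)) * euclideanArea (v + w) := by
  have hv' : (1 - w / (v + w)) * (v + w) = v := by field_simp; ring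
  have hw' : w / (v + w) * (v + w) = w := div_mul_cancel₀ w hvw.ne'
  have h1 : 0 ≤ 1 - w / (v + w) := by rw [sub_nonneg, div_le_one hvw]; linarith
  calc 2 * euclideanArea (v / 2) + euclideanArea w
      = 2 ^ ((1 : ℝ) / 3) * euclideanArea ((1 - w / (v + w)) * (v + w)) +
        euclideanArea (w / (v + w) * (v + w)) := by
        rw [two_mul_euclideanArea_half hv, hv', hw']
    _ = splitAreaRatio (w / (v + w)) * euclideanArea (v + w) := by
        rw [euclideanArea_mul h1 hvw.le, euclideanArea_mul (by positivity) hvw.le, splitAreaRatio]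
        ring

lemma concaveOn_splitAreaRatio : ConcaveOn ℝ (Icc 0 1) splitAreaRatio := by
  have hpow : ConcaveOn ℝ (Ici 0) fun t : ℝ => t ^ ((2 : ℝ) / 3) :=
    Real.concaveOn_rpow (by norm_num) (by norm_num)
  have hflip : ConcaveOn ℝ (Iic 1) fun t : ℝ => (1 - t) ^ ((2 : ℝ) / 3) := by
    have := hpow.comp_affineMap (AffineMap.const ℝ ℝ (1 : ℝ) - AffineMap.id ℝ ℝ)
    have hpre : ((1 : ℝ → ℝ) - id) ⁻¹' Ici 0 = Iic 1 := by ext; simp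
    simpa [Function.comp_def, hpre] using this
  exact ((hflip.subset Icc_subset_Iic_self (convex_Icc 0 1)).smul (by positivity)).add
    (hpow.subset Icc_subset_Ici_self (convex_Icc 0 1))

lemma le_two_rpow_one_third : (1.25992104 : ℝ) ≤ 2 ^ ((1 : ℝ) / 3) := by
  exact_mod_cast le_rpow_div_of_pow_le (m := 1) (n := 3) zero_le_two (by norm_num) (by norm_num)

lemma le_splitAreaRatio {t : ℝ} (ht : t ∈ Icc (1 / 2) (25 / 46)) : 1.412965 ≤ splitAreaRatio t := by
  have h2 := le_two_rpow_one_third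
  have hhalf : (0.62996052 : ℝ) ≤ (1 / 2) ^ ((2 : ℝ) / 3) := by
    exact_mod_cast le_rpow_div_of_pow_le (m := 2) (n := 3) (by norm_num) (by norm_num) (by norm_num)
  have h21 : (0.59289025 : ℝ) ≤ (21 / 46) ^ ((2 : ℝ) / 3) := by
    exact_mod_cast le_rpow_div_of_pow_le (m := 2) (n := 3) (by norm_num) (by norm_num) (by norm_num)
  have h25 : (0.66597018 : ℝ) ≤ (25 / 46) ^ ((2 : ℝ) / 3) := by
    exact_mod_cast le_rpow_div_of_pow_le (m := 2) (n := 3) (by norm_num) (by norm_num) (by norm_num)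
  have hmin := concaveOn_splitAreaRatio.min_le_of_mem_Icc (x := 1 / 2) (y := 25 / 46)
    ⟨by norm_num, by norm_num⟩ ⟨by norm_num, by norm_num⟩ ht
  refine le_trans ?_ hmin
  norm_num only [splitAreaRatio, le_min_iff]
  constructor <;> nlinarith

lemma lt_splitAreaRatio_add_one {t : ℝ} (ht : t ∈ Icc (1 / 2) (25 / 46)) :
    2.02676 * (2 ^ (-(4 : ℝ) / 3) * 3) < splitAreaRatio t + 1 := by
  have h2 := le_two_rpow_one_third
  rw [show -(4 : ℝ) / 3 = -(1 + 1 / 3) by norm_num, rpow_neg zero_le_two, rpow_add two_pos,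
    rpow_one, inv_mul_eq_div, mul_div_assoc', div_lt_iff₀ (by positivity)]
  nlinarith [le_splitAreaRatio ht]

theorem strengthened_euclidean_inequality_general (B : ℝ → ℝ → ℝ)
    (hBconc : ∀ v w : ℝ, 0 < v → 0 < w → B v w ≤ B ((v + w) / 2) ((v + w) / 2))
    (hBeq : ∀ t : ℝ, 0 < t → B t t = 2 ^ (-(4 : ℝ) / 3) * 3 * euclideanArea (2 * t))
    (v w : ℝ) (hv : 0 < v) (hlo : 0.84 * w ≤ v) (hhi : v ≤ w) :
    2 * euclideanArea (v / 2) + euclideanArea w + euclideanArea (v + w) >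
      2.02676 * B v w := by
  have hw : 0 < w := hv.trans_le hhi
  have hvw : 0 < v + w := add_pos hv hw
  have hB : B v w ≤ 2 ^ (-(4 : ℝ) / 3) * 3 * euclideanArea (v + w) := by
    have hsym := hBeq ((v + w) / 2) (half_pos hvw)
    rw [mul_div_cancel₀ (v + w) two_ne_zero] at hsym
    exact (hBconc v w hv hw).trans_eq hsym
  have ht : w / (v + w) ∈ Icc (1 / 2) (25 / 46) := by
    constructor
    · rw [le_div_iff₀ hvw]; linarith
    · rw [div_le_iff₀ hvw]; linarith
  calc 2.02676 * B v w
      ≤ 2.02676 * (2 ^ (-(4 : ℝ) / 3) * 3) * euclideanArea (v + w) := by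
        rw [mul_assoc]; gcongr
    _ < (splitAreaRatio (w / (v + w)) + 1) * euclideanArea (v + w) :=
        mul_lt_mul_of_pos_right (lt_splitAreaRatio_add_one ht) (euclideanArea_pos hvw)
    _ = 2 * euclideanArea (v / 2) + euclideanArea w + euclideanArea (v + w) := by
        rw [add_mul, ← two_mul_euclideanArea_half_add hv.le hw.le hvw, one_mul]

/-- If `0.84 w ≤ v ≤ w` (with `v, w > 0`), and the standard double bubble area `B`
satisfies `B(v,w) ≤ B((v+w)/2, (v+w)/2)` (concavity) with
`B(t,t) = 2^{−4/3}·3·A(2t)`, then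
`2A(v/2) + A(w) + A(v+w) > 2.02676 · B(v,w)`. -/
theorem strengthened_euclidean_inequality (B : ℝ → ℝ → ℝ)
    (hBconc : ∀ v w : ℝ, 0 < v → 0 < w → B v w ≤ B ((v + w) / 2) ((v + w) / 2))
    (hBeq : ∀ t : ℝ, 0 < t → B t t = 2 ^ (-(4 : ℝ) / 3) * 3 * euclideanArea (2 * t))
    (hBpos : ∀ v w : ℝ, 0 < v → 0 < w → 0 < B v w)
    (v w : ℝ) (hv : 0 < v) (hlo : 0.84 * w ≤ v) (hhi : v ≤ w) :
    2 * euclideanArea (v / 2) + euclideanArea w + euclideanArea (v + w) >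
      2.02676 * B v w :=
  strengthened_euclidean_inequality_general B hBconc hBeq v w hv hlo hhi
end

section
/- For each fixed ratio ψ > 0, the Hutchings function in H³ satisfies lim_{w→∞} F(ψw, w) = 2π ln(4(ψ+1)/e²); in particular this limit is nonnegative if and only if ψ ≥ e²/4 − 1. -/
/-!
Replacing every sphere area by its asymptotic profile `2x + 2π ln x − const` and the double bubble
by its asymptotic expression costs only `o(1)`. In the resulting combination the terms linear
in `w` and the constants cancel up to `−8 v∞ + 4 a∞ − 2 c∞`, and the logarithms, whose
coefficients sum to zero, converge to `2π (ln (ψ + 1) − 2 ln 2)`.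
-/

open Filter Topology Real

noncomputable section

/-- The asymptotic profile of the area of a sphere of volume `x` in `H³`. -/
def hypSphereArea (x : ℝ) : ℝ :=
  2 * x + 2 * π * log x - 2 * π * (1 - log (π / 2))

/-- The Hutchings function along the ray `(ψ w, w)`, with the sphere areas replaced by `S`
and the double bubble by its asymptotic expression `S (ψ w + v) + S (w + v)` (without the
additive constant). -/
def rayCombination (S : ℝ → ℝ) (ψ v w : ℝ) : ℝ :=
  2 * S (ψ * w / 2) + S w + S (ψ * w + w) - 2 * S (ψ * w + v) - 2 * S (w + v)

end

theorem tendsto_mul_add_div_atTop (a b : ℝ) :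
    Tendsto (fun x => (a * x + b) / x) atTop (𝓝 a) := by
  have h : Tendsto (fun x => a + b / x) atTop (𝓝 (a + 0)) :=
    tendsto_const_nhds.add (tendsto_const_nhds.div_atTop tendsto_id)
  rw [add_zero] at h
  refine h.congr' ?_
  filter_upwards [eventually_ne_atTop 0] with x hx
  field_simp

theorem tendsto_log_sub_log_of_tendsto_div {α : Type*} {l : Filter α} {f g : α → ℝ} {a : ℝ}
    (ha : a ≠ 0) (hg : ∀ᶠ x in l, g x ≠ 0) (h : Tendsto (fun x => f x / g x) l (𝓝 a)) :
    Tendsto (fun x => log (f x) - log (g x)) l (𝓝 (log a)) := by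
  refine ((continuousAt_log ha).tendsto.comp h).congr' ?_
  filter_upwards [hg, h.eventually_ne ha] with x hgx hfgx
  exact log_div (left_ne_zero_of_mul (by rwa [div_eq_mul_inv] at hfgx)) hgx

theorem tendsto_log_mul_add_sub_log (a b : ℝ) (ha : a ≠ 0) :
    Tendsto (fun x => log (a * x + b) - log x) atTop (𝓝 (log a)) :=
  tendsto_log_sub_log_of_tendsto_div ha (eventually_ne_atTop 0) (tendsto_mul_add_div_atTop a b)

theorem tendsto_rayCombination_hypSphereArea {ψ : ℝ} (hψ : 0 < ψ) (v : ℝ) :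
    Tendsto (rayCombination hypSphereArea ψ v) atTop
      (𝓝 (2 * π * (log (ψ + 1) - 2 * log 2) - 8 * v)) := by
  have h₁ := (tendsto_log_mul_add_sub_log (ψ / 2) 0 (by positivity)).congr fun w => by
    rw [show ψ / 2 * w + 0 = ψ * w / 2 by ring]
  have h₂ := (tendsto_log_mul_add_sub_log (ψ + 1) 0 (by positivity)).congr fun w => by
    rw [show (ψ + 1) * w + 0 = ψ * w + w by ring]
  have h₃ := tendsto_log_mul_add_sub_log ψ v hψ.ne'
  have h₄ := (tendsto_log_mul_add_sub_log 1 v one_ne_zero).congr fun w => by rw [one_mul]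
  -- the coefficients of `log w` add up to `2 + 1 + 1 - 2 - 2 = 0`
  have h := ((((h₁.const_mul 2).add h₂).sub (h₃.const_mul 2)).sub (h₄.const_mul 2)).const_mul
    (2 * π) |>.sub_const (8 * v)
  convert h using 2 with w
  · simp only [rayCombination, hypSphereArea]
    ring
  · rw [log_div hψ.ne' two_ne_zero, log_one]
    ring

theorem tendsto_hutchings_of_tendsto_rayCombination {A S : ℝ → ℝ} {B : ℝ → ℝ → ℝ}
    {ψ v a c L : ℝ} (hψ : 0 < ψ) (hA : Tendsto (fun x => A x - S x) atTop (𝓝 0))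
    (hB : Tendsto (fun w => B (ψ * w) w - (A (ψ * w + v) + A (w + v) - 2 * a + c)) atTop (𝓝 0))
    (hS : Tendsto (rayCombination S ψ v) atTop (𝓝 L)) :
    Tendsto (fun w => 2 * A (ψ * w / 2) + A w + A (ψ * w + w) - 2 * B (ψ * w) w) atTop
      (𝓝 (L + 4 * a - 2 * c)) := by
  have hψw : Tendsto (fun w => ψ * w) atTop atTop := tendsto_id.const_mul_atTop hψ
  have e₁ := hA.comp (hψw.atTop_div_const two_pos)
  have e₂ := hA.comp tendsto_id
  have e₃ := hA.comp (hψw.atTop_add_atTop tendsto_id)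
  have e₄ := hA.comp (tendsto_atTop_add_const_right _ v hψw)
  have e₅ := hA.comp (tendsto_atTop_add_const_right _ v tendsto_id)
  have h := (((((((e₁.const_mul 2).add e₂).add e₃).sub (hB.const_mul 2)).sub
    (e₄.const_mul 2)).sub (e₅.const_mul 2)).add hS).add_const (4 * a - 2 * c)
  convert h using 2 with w
  · simp only [rayCombination, Function.comp, id]
    ring
  · ring

theorem two_pi_mul_log_four_mul_div_exp_two {x : ℝ} (hx : x ≠ 0) :
    2 * π * (log x - 2 * log 2) - 8 * (π * (3 / 2 - log 2)) + 4 * (3 * π) - 2 * (2 * π) =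
      2 * π * log (4 * x / exp 2) := by
  rw [log_div (by positivity) (exp_ne_zero 2), log_exp, log_mul four_ne_zero hx,
    show (4 : ℝ) = 2 ^ 2 by norm_num, log_pow]
  push_cast
  ring

theorem two_pi_mul_log_four_mul_div_exp_two_nonneg_iff {x : ℝ} (hx : 0 < x) :
    0 ≤ 2 * π * log (4 * x / exp 2) ↔ exp 2 / 4 ≤ x := by
  rw [mul_nonneg_iff_of_pos_left (by positivity), log_nonneg_iff (by positivity),
    one_le_div (exp_pos 2), div_le_iff₀' four_pos]

/-- For each fixed ratio `ψ > 0`, the Hutchings function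
`F(ψw, w) = 2A(ψw/2) + A(w) + A(ψw + w) − 2B(ψw, w)` in `H³` tends to
`2π ln(4(ψ+1)/e²)` as `w → ∞`; in particular this limit is nonnegative if and only if
`ψ ≥ e²/4 − 1`. Here `A` is the sphere area as a function of volume, satisfying
`A(x) = 2x + 2π ln x − 2π(1 − ln(π/2)) + o(1)`, and the standard double bubble area `B`
satisfies `B(v,w) = A(v + v∞) + A(w + v∞) − 2a∞ + c∞ + o(1)` along rays, with
`v∞ = π(3/2 − ln 2)`, `a∞ = 3π`, `c∞ = 2π`. -/
theorem hutchings_limit_along_rays (A : ℝ → ℝ) (B : ℝ → ℝ → ℝ)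
    (hA : Filter.Tendsto
      (fun x => A x - (2 * x + 2 * Real.pi * Real.log x -
        2 * Real.pi * (1 - Real.log (Real.pi / 2)))) Filter.atTop (nhds 0))
    (hB : ∀ ψ : ℝ, 0 < ψ → Filter.Tendsto
      (fun w => B (ψ * w) w -
        (A (ψ * w + Real.pi * (3 / 2 - Real.log 2)) +
         A (w + Real.pi * (3 / 2 - Real.log 2)) - 2 * (3 * Real.pi) + 2 * Real.pi))
      Filter.atTop (nhds 0))
    (ψ : ℝ) (hψ : 0 < ψ) :
    Filter.Tendsto
      (fun w => 2 * A (ψ * w / 2) + A w + A (ψ * w + w) - 2 * B (ψ * w) w)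
      Filter.atTop (nhds (2 * Real.pi * Real.log (4 * (ψ + 1) / Real.exp 2))) ∧
    (0 ≤ 2 * Real.pi * Real.log (4 * (ψ + 1) / Real.exp 2) ↔
      Real.exp 2 / 4 - 1 ≤ ψ) := by
  have hψ₁ : 0 < ψ + 1 := by linarith
  refine ⟨?_, ?_⟩
  · rw [← two_pi_mul_log_four_mul_div_exp_two hψ₁.ne']
    exact tendsto_hutchings_of_tendsto_rayCombination (S := hypSphereArea) hψ hA (hB ψ hψ)
      (tendsto_rayCombination_hypSphereArea hψ _)
  · rw [two_pi_mul_log_four_mul_div_exp_two_nonneg_iff hψ₁, sub_le_iff_le_add]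
end

section
/- For v ≥ λw and w ≥ 150, where λ = e²/4 − 1, the inequality 1/(v/2 + π ln(v/2) − 1.041) + 1/(v + w + π ln(v+w) − 1.041) > 2/(v + π ln v − 3) holds. -/
/-!
Write `A = v/2 + π log(v/2) - 1.041`, `B = v + w + π log(v+w) - 1.041`, `C = v + π log v - 3`.
Clearing denominators, the claim is `B (2A - C) < A C`. Here `A ≥ v/2` and `C ≥ v`, whereas
`2A - C = π (log(v/2) - log 2) + 0.918` grows only logarithmically. Bounding `log x` by its
tangent line at `e³` makes `B` and `2A - C` at most affine in `v` (`e² > 7` gives `w ≤ 4v/3`),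
and the resulting quadratic inequality holds since `v ≥ 112`.
-/

open Real

lemma one_div_add_one_div_gt_two_div {a b c : ℝ} (ha : 0 < a) (hb : 0 < b) (hc : 0 < c)
    (h : b * (2 * a - c) < a * c) : 1 / a + 1 / b > 2 / c := by
  rw [gt_iff_lt, div_add_div _ _ ha.ne' hb.ne', div_lt_div_iff₀ hc (mul_pos ha hb)]
  linarith

namespace Real

lemma log_le_div_exp_add_sub_one (k : ℝ) {x : ℝ} (hx : 0 < x) :
    log x ≤ x / exp k + k - 1 := by
  have h := log_le_sub_one_of_pos (div_pos hx (exp_pos k))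
  rw [log_div hx.ne' (exp_ne_zero k), log_exp] at h
  linarith

lemma seven_lt_exp_two : 7 < exp 2 := by
  rw [show (2 : ℝ) = (2 : ℕ) by norm_num, ← exp_one_pow]
  calc (7 : ℝ) < 2.7182818283 ^ 2 := by norm_num
    _ < exp 1 ^ 2 := by gcongr; exact exp_one_gt_d9

lemma twenty_lt_exp_three : 20 < exp 3 := by
  rw [show (3 : ℝ) = (3 : ℕ) by norm_num, ← exp_one_pow]
  calc (20 : ℝ) < 2.7182818283 ^ 3 := by norm_num
    _ < exp 1 ^ 3 := by gcongr; exact exp_one_gt_d9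

lemma pi_mul_log_le {x : ℝ} (hx : 0 < x) : π * log x ≤ x / 5 + 8 := by
  have hlog : log x ≤ x / 20 + 2 := by
    have h := log_le_div_exp_add_sub_one 3 hx
    have : x / exp 3 ≤ x / 20 :=
      div_le_div_of_nonneg_left hx.le (by norm_num) twenty_lt_exp_three.le
    linarith
  calc π * log x ≤ π * (x / 20 + 2) := by gcongr
    _ ≤ 4 * (x / 20 + 2) := mul_le_mul_of_nonneg_right pi_le_four (by linarith)
    _ = x / 5 + 8 := by ring

lemma three_le_pi_mul_log {x : ℝ} (hx : 3 ≤ x) : 3 ≤ π * log x := by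
  have hlog : 1 ≤ log x := by
    rw [le_log_iff_exp_le (by linarith)]
    linarith [exp_one_lt_d9]
  nlinarith [pi_gt_three]

end Real

/-- For `v ≥ λw` and `w ≥ 150` with `λ = e²/4 − 1`,
`1/(v/2 + π ln(v/2) − 1.041) + 1/(v + w + π ln(v+w) − 1.041) > 2/(v + π ln v − 3)`. -/
theorem algebraic_lemma (v w : ℝ) (hw : 150 ≤ w)
    (hv : (Real.exp 2 / 4 - 1) * w ≤ v) :
    1 / (v / 2 + Real.pi * Real.log (v / 2) - 1.041) +
      1 / (v + w + Real.pi * Real.log (v + w) - 1.041) >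
    2 / (v + Real.pi * Real.log v - 3) := by
  have hw_le : 3 * w ≤ 4 * v := by nlinarith [seven_lt_exp_two]
  have hv_ge : 112 ≤ v := by linarith
  have hpi_log : π * log v = π * log (v / 2) + π * log 2 := by
    rw [log_div (by positivity) two_ne_zero]; ring
  have hpi_log_two : 2 ≤ π * log 2 := by nlinarith [pi_gt_three, log_two_gt_d9]
  have hpi_log_two_le : π * log 2 ≤ π * log (v / 2) := by gcongr; linarith
  have hL_ge := three_le_pi_mul_log (x := v / 2) (by linarith)
  have hM_ge := three_le_pi_mul_log (x := v + w) (by linarith)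
  have hL_le := pi_mul_log_le (x := v / 2) (by positivity)
  have hM_le := pi_mul_log_le (x := v + w) (by positivity)
  set A := v / 2 + π * log (v / 2) - 1.041 with hA_def
  set B := v + w + π * log (v + w) - 1.041 with hB_def
  set C := v + π * log v - 3 with hC_def
  have hA : v / 2 ≤ A := by linarith
  have hC : v ≤ C := by linarith
  have hB_pos : 0 < B := by linarith
  have hB : B ≤ 2.8 * v + 7 := by linarith
  have hD_nonneg : 0 ≤ 2 * A - C := by linarith
  have hD : 2 * A - C ≤ v / 10 + 7 := by linarith
  refine one_div_add_one_div_gt_two_div (by linarith) hB_pos (by linarith) ?_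
  calc B * (2 * A - C) ≤ (2.8 * v + 7) * (v / 10 + 7) := mul_le_mul hB hD hD_nonneg (by linarith)
    _ < v / 2 * v := by nlinarith
    _ ≤ A * C := mul_le_mul hA hC (by linarith) (by linarith)
end
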